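/- Work in ℝ^8 with the standard inner product ⟨·,·⟩ and standard basis e_1,…,e_8. Let V be the 56-point set {±(4e_i + 4e_j − (e_1 + ⋯ + e_8)) : 1 ≤ i < j ≤ 8} (the vertex set of the polytope 3_21). Let Φ be the E_7 root system Φ = {e_i − e_j : 1 ≤ i, j ≤ 8, i ≠ j} ∪ {(1/2)(Σ_{i∈I} e_i − Σ_{j∈{1,…,8}∖I} e_j) : I ⊆ {1,…,8}, |I| = 4}, and for α ∈ Φ let r_α(x) = x − (2⟨x,α⟩/⟨α,α⟩)·α. Let M ⊆ V. Then the following are equivalent: (a) for all u, v ∈ M with u ≠ v there exists α ∈ Φ with ⟨u,α⟩·⟨v,α⟩ < 0, r_α(u) ∈ M and r_α(v) ∈ M; (b) both of the following hold: (i) for every pair A, A′ ∈ V with ⟨A,A′⟩ = −8, setting ◇ = {A, A′} ∪ {C ∈ V : ⟨C,A⟩ = 8 and ⟨C,A′⟩ = 8}, the number of unordered pairs {B, B′} of distinct points of ◇ with ⟨B,B′⟩ = −8, B ∈ M and B′ ∈ M is not equal to 1; and (ii) the number of points w ∈ V with both w ∈ M and −w ∈ M is not equal to 2. -/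

import Mathlib

/-- The `i`-th standard basis vector of `ℝ^8`. -/
noncomputable def e8 (i : Fin 8) : EuclideanSpace ℝ (Fin 8) :=
  EuclideanSpace.single i 1

/-- The 56-point vertex set of the polytope `3_21`:
`±(4e_i + 4e_j − (e_1 + ⋯ + e_8))` for `1 ≤ i < j ≤ 8`. -/
noncomputable def V321 : Set (EuclideanSpace ℝ (Fin 8)) :=
  {v | ∃ i j : Fin 8, i < j ∧
        (v = (4 : ℝ) • e8 i + (4 : ℝ) • e8 j - ∑ k, e8 k ∨
         v = -((4 : ℝ) • e8 i + (4 : ℝ) • e8 j - ∑ k, e8 k))}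

/-- The root system of type `E_7`, realised inside `ℝ^8`. -/
noncomputable def PhiE7 : Set (EuclideanSpace ℝ (Fin 8)) :=
  {α | (∃ i j : Fin 8, i ≠ j ∧ α = e8 i - e8 j)
     ∨ (∃ I : Finset (Fin 8), I.card = 4 ∧
          α = (1 / 2 : ℝ) • (∑ i ∈ I, e8 i - ∑ j ∈ Iᶜ, e8 j))}

/-- The reflection in the hyperplane orthogonal to `α`. -/
noncomputable def reflVec (α x : EuclideanSpace ℝ (Fin 8)) :
    EuclideanSpace ℝ (Fin 8) :=
  x - (2 * (inner ℝ x α : ℝ) / (inner ℝ α α : ℝ)) • α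

local notation "⟪" x ", " y "⟫" => (inner ℝ x y : ℝ)

lemma inner_e8 (i j : Fin 8) : ⟪e8 i, e8 j⟫ = if i = j then 1 else 0 := by
  simp [e8, EuclideanSpace.inner_single_left, EuclideanSpace.single_apply, eq_comm]

noncomputable def wv (i j : Fin 8) : EuclideanSpace ℝ (Fin 8) :=
  (4 : ℝ) • e8 i + (4 : ℝ) • e8 j - ∑ k, e8 k

lemma wv_comm (i j : Fin 8) : wv i j = wv j i := by
  unfold wv; rw [add_comm ((4:ℝ) • e8 i)]

lemma mem_V321 {v : EuclideanSpace ℝ (Fin 8)} :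
    v ∈ V321 ↔ ∃ i j : Fin 8, i ≠ j ∧ (v = wv i j ∨ v = -wv i j) := by
  constructor
  · rintro ⟨i, j, hij, h⟩; exact ⟨i, j, hij.ne, h⟩
  · rintro ⟨i, j, hij, h⟩
    rcases hij.lt_or_gt with hlt | hlt
    · exact ⟨i, j, hlt, h⟩
    · refine ⟨j, i, hlt, ?_⟩
      show v = wv j i ∨ v = -wv j i
      rw [← wv_comm]; exact h

lemma inner_wv (i j k l : Fin 8) :
    ⟪wv i j, wv k l⟫ =
      16 * ((if i = k then (1:ℝ) else 0) + (if i = l then (1:ℝ) else 0)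
        + (if j = k then (1:ℝ) else 0) + (if j = l then (1:ℝ) else 0)) - 8 := by
  simp only [wv, inner_sub_left, inner_sub_right, inner_add_left, inner_add_right,
    real_inner_smul_left, real_inner_smul_right, sum_inner, inner_sum, inner_e8,
    Finset.sum_ite_eq, Finset.sum_ite_eq', Finset.mem_univ, if_true]
  simp only [Finset.sum_sub_distrib, Finset.sum_add_distrib, mul_ite, mul_one, mul_zero,
    Finset.sum_ite_eq, Finset.sum_ite_eq', Finset.mem_univ, if_true, Finset.sum_const,
    Finset.card_univ, Fintype.card_fin, nsmul_eq_mul]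
  split_ifs <;> ring

lemma inner_wv_self {i j : Fin 8} (hij : i ≠ j) : ⟪wv i j, wv i j⟫ = 24 := by
  rw [inner_wv]; simp [hij, hij.symm]; ring

lemma V321_norm {u : EuclideanSpace ℝ (Fin 8)} (hu : u ∈ V321) : ⟪u, u⟫ = 24 := by
  rw [mem_V321] at hu
  obtain ⟨i, j, hij, h | h⟩ := hu <;> subst h <;>
    simp only [inner_neg_neg, inner_wv_self hij]

lemma V321_neg {u : EuclideanSpace ℝ (Fin 8)} (hu : u ∈ V321) : -u ∈ V321 := by
  rw [mem_V321] at hu ⊢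
  obtain ⟨i, j, hij, h | h⟩ := hu
  · exact ⟨i, j, hij, Or.inr (by rw [h])⟩
  · exact ⟨i, j, hij, Or.inl (by rw [h, neg_neg])⟩

lemma V321_inner {u v : EuclideanSpace ℝ (Fin 8)} (hu : u ∈ V321) (hv : v ∈ V321) :
    ⟪u, v⟫ = 24 ∨ ⟪u, v⟫ = 8 ∨ ⟪u, v⟫ = -8 ∨ ⟪u, v⟫ = -24 := by
  rw [mem_V321] at hu hv
  obtain ⟨i, j, hij, hu | hu⟩ := hu <;> obtain ⟨k, l, hkl, hv | hv⟩ := hv <;>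
    subst hu <;> subst hv <;>
    simp only [inner_neg_left, inner_neg_right, neg_neg, inner_wv] <;>
    split_ifs <;> simp_all <;> norm_num

lemma eq_of_inner24 {u v : EuclideanSpace ℝ (Fin 8)} (hu : ⟪u, u⟫ = 24)
    (hv : ⟪v, v⟫ = 24) (huv : ⟪u, v⟫ = 24) : u = v := by
  have hvu : ⟪v, u⟫ = 24 := by rw [real_inner_comm]; exact huv
  have h0 : ⟪u - v, u - v⟫ = 0 := by
    simp only [inner_sub_left, inner_sub_right, hu, hv, huv, hvu]; ring
  exact sub_eq_zero.mp (inner_self_eq_zero.mp h0)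

lemma V321_eq {u v : EuclideanSpace ℝ (Fin 8)} (hu : u ∈ V321) (hv : v ∈ V321)
    (h : ⟪u, v⟫ = 24) : u = v :=
  eq_of_inner24 (V321_norm hu) (V321_norm hv) h

lemma V321_neg_eq {u v : EuclideanSpace ℝ (Fin 8)} (hu : u ∈ V321) (hv : v ∈ V321)
    (h : ⟪u, v⟫ = -24) : u = -v := by
  refine eq_of_inner24 (V321_norm hu) ?_ ?_
  · rw [inner_neg_neg]; exact V321_norm hv
  · rw [inner_neg_right, h]; norm_num

lemma inner_e8_sum (i : Fin 8) (I : Finset (Fin 8)) :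
    ⟪e8 i, ∑ x ∈ I, e8 x⟫ = if i ∈ I then 1 else 0 := by
  simp only [inner_sum, inner_e8, Finset.sum_ite_eq]

lemma inner_sum_sum (I J : Finset (Fin 8)) :
    ⟪∑ x ∈ I, e8 x, ∑ x ∈ J, e8 x⟫ = (I ∩ J).card := by
  simp only [sum_inner, inner_e8_sum]
  rw [Finset.sum_ite_mem, Finset.card_eq_sum_ones (I ∩ J)]
  push_cast; simp

lemma sum_compl_e8 (I : Finset (Fin 8)) :
    ∑ x ∈ Iᶜ, e8 x = (∑ x, e8 x) - ∑ x ∈ I, e8 x := by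
  rw [eq_sub_iff_add_eq, Finset.sum_compl_add_sum]

lemma root_norm {α : EuclideanSpace ℝ (Fin 8)} (hα : α ∈ PhiE7) : ⟪α, α⟫ = 2 := by
  obtain ⟨i, j, hij, rfl⟩ | ⟨I, hI, rfl⟩ := hα
  · simp only [inner_sub_left, inner_sub_right, inner_e8, if_pos rfl, if_neg hij,
      if_neg hij.symm]
    norm_num
  · rw [sum_compl_e8]
    simp only [real_inner_smul_left, real_inner_smul_right, inner_sub_left, inner_sub_right,
      inner_sum_sum]
    have h1 : (I ∩ I).card = 4 := by rw [Finset.inter_self]; exact hI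
    have h2 : (I ∩ Finset.univ).card = 4 := by rw [Finset.inter_univ]; exact hI
    have h3 : ((Finset.univ : Finset (Fin 8)) ∩ I).card = 4 := by rw [Finset.univ_inter]; exact hI
    have h4 : ((Finset.univ : Finset (Fin 8)) ∩ Finset.univ).card = 8 := by simp
    rw [h1, h2, h3, h4]; norm_num

lemma inner_wv_root1 (i j k l : Fin 8) :
    ⟪wv i j, e8 k - e8 l⟫ =
      4 * ((if i = k then (1:ℝ) else 0) + (if j = k then (1:ℝ) else 0))
      - 4 * ((if i = l then (1:ℝ) else 0) + (if j = l then (1:ℝ) else 0)) := by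
  simp only [wv, inner_sub_left, inner_sub_right, inner_add_left,
    real_inner_smul_left, sum_inner, inner_e8, Finset.sum_ite_eq, Finset.sum_ite_eq',
    Finset.mem_univ, if_true]
  ring

lemma inner_wv_sum (i j : Fin 8) (I : Finset (Fin 8)) :
    ⟪wv i j, ∑ x ∈ I, e8 x⟫ =
      4 * (if i ∈ I then (1:ℝ) else 0) + 4 * (if j ∈ I then (1:ℝ) else 0) - I.card := by
  simp only [wv, inner_sub_left, inner_add_left, real_inner_smul_left, inner_e8_sum, sum_inner]
  rw [Finset.sum_boole]
  simp [Finset.filter_mem_eq_inter]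

lemma inner_wv_root2 (i j : Fin 8) {I : Finset (Fin 8)} (hI : I.card = 4) :
    ⟪wv i j, (1 / 2 : ℝ) • (∑ x ∈ I, e8 x - ∑ x ∈ Iᶜ, e8 x)⟫ =
      4 * ((if i ∈ I then (1:ℝ) else 0) + (if j ∈ I then (1:ℝ) else 0)) - 4 := by
  rw [sum_compl_e8, real_inner_smul_right, inner_sub_right, inner_sub_right,
    inner_wv_sum, inner_wv_sum, hI]
  simp only [Finset.mem_univ, if_true, Finset.card_univ, Fintype.card_fin]
  push_cast; ring

lemma pairing {u α : EuclideanSpace ℝ (Fin 8)} (hu : u ∈ V321) (hα : α ∈ PhiE7) :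
    ⟪u, α⟫ = 0 ∨ ⟪u, α⟫ = 4 ∨ ⟪u, α⟫ = -4 := by
  rw [mem_V321] at hu
  obtain ⟨i, j, hij, hu | hu⟩ := hu <;> subst hu <;>
  · obtain ⟨k, l, hkl, rfl⟩ | ⟨I, hI, rfl⟩ := hα
    · simp only [inner_neg_left, inner_wv_root1]
      split_ifs <;> simp_all <;> norm_num
    · simp only [inner_neg_left, inner_wv_root2 i j hI]
      split_ifs <;> norm_num

lemma phi_neg {α : EuclideanSpace ℝ (Fin 8)} (hα : α ∈ PhiE7) : -α ∈ PhiE7 := by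
  obtain ⟨i, j, hij, rfl⟩ | ⟨I, hI, rfl⟩ := hα
  · exact Or.inl ⟨j, i, hij.symm, by module⟩
  · refine Or.inr ⟨Iᶜ, ?_, ?_⟩
    · rw [Finset.card_compl, hI]; rfl
    · rw [compl_compl]; module

lemma adjc1 {i j k l : Fin 8} (h1 : i = k) (h4 : j ≠ l) :
    (4:ℝ)⁻¹ • (wv i j - wv k l) ∈ PhiE7 := by
  subst h1; exact Or.inl ⟨j, l, h4, by unfold wv; module⟩

lemma adjc2 {i j k l : Fin 8} (h2 : i = l) (h3 : j ≠ k) :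
    (4:ℝ)⁻¹ • (wv i j - wv k l) ∈ PhiE7 := by
  subst h2; exact Or.inl ⟨j, k, h3, by unfold wv; module⟩

lemma adjc3 {i j k l : Fin 8} (h3 : j = k) (h2 : i ≠ l) :
    (4:ℝ)⁻¹ • (wv i j - wv k l) ∈ PhiE7 := by
  subst h3; exact Or.inl ⟨i, l, h2, by unfold wv; module⟩

lemma adjc4 {i j k l : Fin 8} (h4 : j = l) (h1 : i ≠ k) :
    (4:ℝ)⁻¹ • (wv i j - wv k l) ∈ PhiE7 := by
  subst h4; exact Or.inl ⟨i, k, h1, by unfold wv; module⟩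

lemma adj_pp {i j k l : Fin 8} (hij : i ≠ j) (hkl : k ≠ l)
    (h : ⟪wv i j, wv k l⟫ = 8) : (4:ℝ)⁻¹ • (wv i j - wv k l) ∈ PhiE7 := by
  rw [inner_wv] at h
  split_ifs at h <;> norm_num at h <;>
  first
  | (apply adjc1 <;> assumption)
  | (apply adjc2 <;> assumption)
  | (apply adjc3 <;> assumption)
  | (apply adjc4 <;> assumption)

lemma adj_pm {i j k l : Fin 8} (hij : i ≠ j) (hkl : k ≠ l)
    (h : ⟪wv i j, wv k l⟫ = -8) : (4:ℝ)⁻¹ • (wv i j + wv k l) ∈ PhiE7 := by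
  rw [inner_wv] at h
  split_ifs at h <;> norm_num at h
  rename_i h1 h2 h3 h4
  refine Or.inr ⟨{i, j, k, l}, ?_, ?_⟩
  · rw [Finset.card_insert_of_notMem (by simp [hij, h1, h2]),
      Finset.card_insert_of_notMem (by simp [h3, h4]), Finset.card_pair hkl]
  · rw [sum_compl_e8]
    have hs : ∑ x ∈ ({i, j, k, l} : Finset (Fin 8)), e8 x = e8 i + e8 j + e8 k + e8 l := by
      rw [Finset.sum_insert (by simp [hij, h1, h2]),
        Finset.sum_insert (by simp [h3, h4]), Finset.sum_pair hkl]
      abel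
    rw [hs]; unfold wv; module

lemma root_of_adjacent {u v : EuclideanSpace ℝ (Fin 8)} (hu : u ∈ V321) (hv : v ∈ V321)
    (h : ⟪u, v⟫ = 8) : (4:ℝ)⁻¹ • (u - v) ∈ PhiE7 := by
  rw [mem_V321] at hu hv
  obtain ⟨i, j, hij, rfl | rfl⟩ := hu <;> obtain ⟨k, l, hkl, rfl | rfl⟩ := hv
  · exact adj_pp hij hkl h
  · have h' : ⟪wv i j, wv k l⟫ = -8 := by rw [inner_neg_right] at h; linarith
    have e : (4:ℝ)⁻¹ • (wv i j - -wv k l) = (4:ℝ)⁻¹ • (wv i j + wv k l) := by module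
    rw [e]; exact adj_pm hij hkl h'
  · have h' : ⟪wv i j, wv k l⟫ = -8 := by rw [inner_neg_left] at h; linarith
    have e : (4:ℝ)⁻¹ • (-wv i j - wv k l) = -((4:ℝ)⁻¹ • (wv i j + wv k l)) := by module
    rw [e]; exact phi_neg (adj_pm hij hkl h')
  · have h' : ⟪wv k l, wv i j⟫ = 8 := by
      rw [inner_neg_neg] at h; rw [real_inner_comm]; exact h
    have e : (4:ℝ)⁻¹ • (-wv i j - -wv k l) = (4:ℝ)⁻¹ • (wv k l - wv i j) := by module
    rw [e]; exact adj_pp hkl hij h'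

lemma reflVec_eq {α : EuclideanSpace ℝ (Fin 8)} (hα : ⟪α, α⟫ = 2)
    (x : EuclideanSpace ℝ (Fin 8)) : reflVec α x = x - (⟪x, α⟫ : ℝ) • α := by
  unfold reflVec; rw [hα]; congr 1; ring

lemma inner_reflVec_left {α u y : EuclideanSpace ℝ (Fin 8)} (hαα : ⟪α, α⟫ = 2) :
    ⟪reflVec α u, y⟫ = ⟪u, y⟫ - ⟪u, α⟫ * ⟪α, y⟫ := by
  rw [reflVec_eq hαα, inner_sub_left, real_inner_smul_left]

lemma inner_reflVec_right {α v y : EuclideanSpace ℝ (Fin 8)} (hαα : ⟪α, α⟫ = 2) :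
    ⟪y, reflVec α v⟫ = ⟪y, v⟫ - ⟪v, α⟫ * ⟪y, α⟫ := by
  rw [reflVec_eq hαα, inner_sub_right, real_inner_smul_right]

lemma reflVec_neg (α x : EuclideanSpace ℝ (Fin 8)) : reflVec α (-x) = -reflVec α x := by
  unfold reflVec
  rw [inner_neg_left, mul_neg, neg_div, neg_smul, sub_neg_eq_add, neg_sub']
  abel

lemma sign_cases {u v α : EuclideanSpace ℝ (Fin 8)} (hu : u ∈ V321) (hv : v ∈ V321)
    (hα : α ∈ PhiE7) (hlt : ⟪u, α⟫ * ⟪v, α⟫ < 0) :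
    (⟪u, α⟫ = 4 ∧ ⟪v, α⟫ = -4) ∨ (⟪u, α⟫ = -4 ∧ ⟪v, α⟫ = 4) := by
  rcases pairing hu hα with h | h | h <;> rcases pairing hv hα with h' | h' | h' <;>
    rw [h, h'] at hlt <;> rw [h, h'] <;> norm_num at hlt <;> norm_num

/-- The key consequences of one exchange step. -/
lemma step {u v α : EuclideanSpace ℝ (Fin 8)} (hu : u ∈ V321) (hv : v ∈ V321)
    (hα : α ∈ PhiE7) (hlt : ⟪u, α⟫ * ⟪v, α⟫ < 0) :
    reflVec α u + reflVec α v = u + v ∧ ⟪reflVec α u, u⟫ = 8 ∧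
      ⟪reflVec α u, v⟫ = ⟪u, v⟫ + 16 ∧ ⟪reflVec α u, reflVec α v⟫ = ⟪u, v⟫ := by
  have hαα := root_norm hα
  have hαu : ⟪α, u⟫ = ⟪u, α⟫ := real_inner_comm _ _
  have hαv : ⟪α, v⟫ = ⟪v, α⟫ := real_inner_comm _ _
  have hcd : ⟪u, α⟫ * ⟪v, α⟫ = -16 ∧ ⟪u, α⟫ * ⟪u, α⟫ = 16 ∧ ⟪v, α⟫ = -⟪u, α⟫ := by
    rcases sign_cases hu hv hα hlt with ⟨h, h'⟩ | ⟨h, h'⟩ <;> rw [h, h'] <;> norm_num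
  obtain ⟨hm, hsq, hneg⟩ := hcd
  refine ⟨?_, ?_, ?_, ?_⟩
  · rw [reflVec_eq hαα, reflVec_eq hαα, hneg]
    module
  · rw [inner_reflVec_left hαα, hαu, V321_norm hu]; linarith
  · rw [inner_reflVec_left hαα, hαv]; linarith
  · rw [inner_reflVec_left hαα, inner_reflVec_right hαα, inner_reflVec_right hαα,
      hαα, hαv, hneg]
    ring

/-- Two points of a facet at inner product −8 sum to the facet "double center". -/
lemma facet_mem {A A' B B' : EuclideanSpace ℝ (Fin 8)} (hA : A ∈ V321) (hA' : A' ∈ V321) (hAA' : ⟪A, A'⟫ = -8)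
    (hB : B ∈ ({A, A'} ∪ {C | C ∈ V321 ∧ ⟪C, A⟫ = 8 ∧ ⟪C, A'⟫ = 8} :
      Set (EuclideanSpace ℝ (Fin 8))))
    (hB' : B' ∈ ({A, A'} ∪ {C | C ∈ V321 ∧ ⟪C, A⟫ = 8 ∧ ⟪C, A'⟫ = 8} :
      Set (EuclideanSpace ℝ (Fin 8))))
    (hBB' : ⟪B, B'⟫ = -8) :
    B ∈ V321 ∧ B' ∈ V321 ∧ B + B' = A + A' := by
  have hBV : B ∈ V321 := by
    rcases hB with h | h
    · rcases h with h | h <;> rw [h] <;> first | exact hA | exact hA'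
    · exact h.1
  have hB'V : B' ∈ V321 := by
    rcases hB' with h | h
    · rcases h with h | h <;> rw [h] <;> first | exact hA | exact hA'
    · exact h.1
  refine ⟨hBV, hB'V, ?_⟩
  rcases hB with hB | ⟨_, hBA, hBA'⟩
  · rcases hB with rfl | rfl
    · -- B = A
      rcases hB' with hB' | ⟨_, hB'A, _⟩
      · rcases hB' with rfl | rfl
        · exact absurd hBB' (by rw [V321_norm hA]; norm_num)
        · rfl
      · exact absurd hBB' (by rw [real_inner_comm, hB'A]; norm_num)
    · -- B = A'
      rcases hB' with hB' | ⟨_, _, hB'A'⟩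
      · rcases hB' with rfl | rfl
        · exact add_comm _ _
        · exact absurd hBB' (by rw [V321_norm hA']; norm_num)
      · exact absurd hBB' (by rw [real_inner_comm, hB'A']; norm_num)
  · rcases hB' with hB' | ⟨_, hB'A, hB'A'⟩
    · rcases hB' with hB'eq | hB'eq <;> rw [hB'eq] at hBB'
      · rw [hBA] at hBB'; norm_num at hBB'
      · rw [hBA'] at hBB'; norm_num at hBB'
    · -- both in the middle ring: norm computation
      have h0 : ⟪B + B' - (A + A'), B + B' - (A + A')⟫ = 0 := by
        simp only [inner_sub_left, inner_sub_right, inner_add_left, inner_add_right]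
        have c1 : ⟪B', B⟫ = -8 := by rw [real_inner_comm]; exact hBB'
        have c2 : ⟪A, B⟫ = 8 := by rw [real_inner_comm]; exact hBA
        have c3 : ⟪A', B⟫ = 8 := by rw [real_inner_comm]; exact hBA'
        have c4 : ⟪A, B'⟫ = 8 := by rw [real_inner_comm]; exact hB'A
        have c5 : ⟪A', B'⟫ = 8 := by rw [real_inner_comm]; exact hB'A'
        have c6 : ⟪A', A⟫ = ⟪A, A'⟫ := real_inner_comm _ _
        have nB := V321_norm hBV; have nB' := V321_norm hB'V
        have nA := V321_norm hA; have nA' := V321_norm hA'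
        linarith
      exact sub_eq_zero.mp (inner_self_eq_zero.mp h0)

lemma pair_to {A A' C C' : EuclideanSpace ℝ (Fin 8)} (hA : A ∈ V321) (hA' : A' ∈ V321)
    (hC : C ∈ V321) (hC' : C' ∈ V321) (hAA' : ⟪A, A'⟫ = -8) (hsum : C + C' = A + A') :
    (C = A ∧ C' = A') ∨ (C = A' ∧ C' = A) ∨
      (⟪C, A⟫ = 8 ∧ ⟪C, A'⟫ = 8 ∧ ⟪C', A⟫ = 8 ∧ ⟪C', A'⟫ = 8) := by
  have hA'A : ⟪A', A⟫ = -8 := by rw [real_inner_comm]; exact hAA'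
  have sA : ⟪C, A⟫ + ⟪C', A⟫ = 16 := by
    have : ⟪C + C', A⟫ = ⟪A + A', A⟫ := by rw [hsum]
    rw [inner_add_left, inner_add_left, V321_norm hA, hA'A] at this
    linarith
  have sA' : ⟪C, A'⟫ + ⟪C', A'⟫ = 16 := by
    have : ⟪C + C', A'⟫ = ⟪A + A', A'⟫ := by rw [hsum]
    rw [inner_add_left, inner_add_left, V321_norm hA', hAA'] at this
    linarith
  rcases V321_inner hC hA with h | h | h | h
  · -- C = A
    have hCA := V321_eq hC hA h
    refine Or.inl ⟨hCA, ?_⟩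
    rw [hCA] at hsum
    exact add_left_cancel hsum
  · -- ⟪C,A⟫ = 8
    have hC'A : ⟪C', A⟫ = 8 := by linarith
    rcases V321_inner hC hA' with h' | h' | h' | h'
    · have := V321_eq hC hA' h'
      rw [this, hA'A] at h; norm_num at h
    · have hC'A' : ⟪C', A'⟫ = 8 := by linarith
      exact Or.inr (Or.inr ⟨h, h', hC'A, hC'A'⟩)
    · have hC'A' : ⟪C', A'⟫ = 24 := by linarith
      have hC'eq := V321_eq hC' hA' hC'A'
      rw [hC'eq] at hsum
      have : C = A := add_right_cancel hsum
      rw [this, V321_norm hA] at h; norm_num at h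
    · have hC'A' : ⟪C', A'⟫ = 40 := by linarith
      rcases V321_inner hC' hA' with h'' | h'' | h'' | h'' <;> linarith
  · -- ⟪C,A⟫ = -8
    have hC'A : ⟪C', A⟫ = 24 := by linarith
    have hC'eq := V321_eq hC' hA hC'A
    refine Or.inr (Or.inl ⟨?_, hC'eq⟩)
    rw [hC'eq, add_comm A A'] at hsum
    exact add_right_cancel hsum
  · -- ⟪C,A⟫ = -24
    have hC'A : ⟪C', A⟫ = 40 := by linarith
    rcases V321_inner hC' hA with h'' | h'' | h'' | h'' <;> linarith

/-- A subset `M` of the vertices of `3_21` satisfies the strong exchange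
property for the `E_7` roots iff (i) for each cross-polytope facet of `3_21` not exactly
one of its antipodal pairs lies in `M`, and (ii) not exactly one antipodal pair `{w, -w}`
of `3_21` lies in `M`. -/
theorem E7_strong_exchange_iff_equations
    (M : Set (EuclideanSpace ℝ (Fin 8))) (hM : M ⊆ V321) :
    (∀ u ∈ M, ∀ v ∈ M, u ≠ v → ∃ α ∈ PhiE7,
      (inner ℝ u α : ℝ) * (inner ℝ v α : ℝ) < 0 ∧ reflVec α u ∈ M ∧ reflVec α v ∈ M)
    ↔
    ((∀ A ∈ V321, ∀ A' ∈ V321, (inner ℝ A A' : ℝ) = -8 →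
      {s : Set (EuclideanSpace ℝ (Fin 8)) | ∃ B B', B ≠ B' ∧ s = {B, B'} ∧
        B ∈ ({A, A'} ∪ {C | C ∈ V321 ∧ (inner ℝ C A : ℝ) = 8 ∧ (inner ℝ C A' : ℝ) = 8} :
          Set (EuclideanSpace ℝ (Fin 8))) ∧
        B' ∈ ({A, A'} ∪ {C | C ∈ V321 ∧ (inner ℝ C A : ℝ) = 8 ∧ (inner ℝ C A' : ℝ) = 8} :
          Set (EuclideanSpace ℝ (Fin 8))) ∧
        (inner ℝ B B' : ℝ) = -8 ∧ B ∈ M ∧ B' ∈ M}.ncard ≠ 1) ∧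
     {w : EuclideanSpace ℝ (Fin 8) | w ∈ V321 ∧ w ∈ M ∧ -w ∈ M}.ncard ≠ 2) := by
  constructor
  · intro hex
    constructor
    · -- (i): no facet has exactly one antipodal pair in M
      intro A hA A' hA' hAA' hcard
      rw [Set.ncard_eq_one] at hcard
      obtain ⟨s₀, hs₀⟩ := hcard
      obtain ⟨hs₀mem, huniq⟩ := Set.eq_singleton_iff_unique_mem.mp hs₀
      obtain ⟨B, B', hne, hs, hBd, hB'd, hBB', hBM, hB'M⟩ := hs₀mem
      obtain ⟨hBV, hB'V, hsum⟩ := facet_mem hA hA' hAA' hBd hB'd hBB'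
      obtain ⟨α, hα, hlt, hrB, hrB'⟩ := hex B hBM B' hB'M hne
      obtain ⟨hsum2, hCB, hCB', hCC'⟩ := step hBV hB'V hα hlt
      have hCV : reflVec α B ∈ V321 := hM hrB
      have hC'V : reflVec α B' ∈ V321 := hM hrB'
      have hsum3 : reflVec α B + reflVec α B' = A + A' := by rw [hsum2, hsum]
      have hCC'8 : ⟪reflVec α B, reflVec α B'⟫ = -8 := by rw [hCC', hBB']
      have hCneC' : reflVec α B ≠ reflVec α B' := by
        intro e; rw [← e, V321_norm hCV] at hCC'8; norm_num at hCC'8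
      have hCneB : reflVec α B ≠ B := by
        intro e; rw [e, V321_norm hBV] at hCB; norm_num at hCB
      have hCneB' : reflVec α B ≠ B' := by
        intro e; rw [e, V321_norm hB'V, hBB'] at hCB'; norm_num at hCB'
      have hmemC : reflVec α B ∈
          ({A, A'} ∪ {C | C ∈ V321 ∧ ⟪C, A⟫ = 8 ∧ ⟪C, A'⟫ = 8} :
            Set (EuclideanSpace ℝ (Fin 8))) ∧ reflVec α B' ∈
          ({A, A'} ∪ {C | C ∈ V321 ∧ ⟪C, A⟫ = 8 ∧ ⟪C, A'⟫ = 8} :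
            Set (EuclideanSpace ℝ (Fin 8))) := by
        rcases pair_to hA hA' hCV hC'V hAA' hsum3 with ⟨e1, e2⟩ | ⟨e1, e2⟩ | ⟨i1, i2, i3, i4⟩
        · constructor
          · rw [e1]; exact Set.mem_union_left _ (Set.mem_insert _ _)
          · rw [e2]; exact Set.mem_union_left _ (Set.mem_insert_of_mem _ rfl)
        · constructor
          · rw [e1]; exact Set.mem_union_left _ (Set.mem_insert_of_mem _ rfl)
          · rw [e2]; exact Set.mem_union_left _ (Set.mem_insert _ _)
        · exact ⟨Set.mem_union_right _ ⟨hCV, i1, i2⟩, Set.mem_union_right _ ⟨hC'V, i3, i4⟩⟩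
      have hkey : ({reflVec α B, reflVec α B'} : Set (EuclideanSpace ℝ (Fin 8))) = s₀ :=
        huniq _ ⟨reflVec α B, reflVec α B', hCneC', rfl, hmemC.1, hmemC.2, hCC'8, hrB, hrB'⟩
      have hkey2 : ({reflVec α B, reflVec α B'} : Set (EuclideanSpace ℝ (Fin 8)))
          = {B, B'} := hkey.trans hs
      have : reflVec α B ∈ ({B, B'} : Set (EuclideanSpace ℝ (Fin 8))) := by
        rw [← hkey2]; exact Set.mem_insert _ _
      rcases this with e | e
      · exact hCneB e
      · exact hCneB' e
    · -- (ii): not exactly one antipodal pair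
      intro hcard
      obtain ⟨x, y, hxy, hS⟩ := Set.ncard_eq_two.mp hcard
      have hx : x ∈ {w : EuclideanSpace ℝ (Fin 8) | w ∈ V321 ∧ w ∈ M ∧ -w ∈ M} := by
        rw [hS]; exact Set.mem_insert _ _
      obtain ⟨hxV, hxM, hnxM⟩ := hx
      have hnx : -x ∈ {w : EuclideanSpace ℝ (Fin 8) | w ∈ V321 ∧ w ∈ M ∧ -w ∈ M} :=
        ⟨V321_neg hxV, hnxM, by rw [neg_neg]; exact hxM⟩
      have hxnnx : x ≠ -x := by
        intro e
        have h24 := V321_norm hxV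
        have h24' := V321_norm hxV
        nth_rewrite 1 [e] at h24'
        rw [inner_neg_left, h24] at h24'
        norm_num at h24'
      obtain ⟨α, hα, hlt, hr1, hr2⟩ := hex x hxM (-x) hnxM hxnnx
      have hwneg : reflVec α (-x) = -reflVec α x := reflVec_neg α x
      have hwV : reflVec α x ∈ V321 := hM hr1
      have hwx : ⟪reflVec α x, x⟫ = 8 := (step hxV (V321_neg hxV) hα hlt).2.1
      have hwS : reflVec α x ∈ {w : EuclideanSpace ℝ (Fin 8) | w ∈ V321 ∧ w ∈ M ∧ -w ∈ M} :=
        ⟨hwV, hr1, by rw [← hwneg]; exact hr2⟩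
      have hy : y = -x := by
        have h := hnx; rw [hS] at h
        rcases h with e | e
        · exact absurd e.symm hxnnx
        · exact e.symm
      rw [hS] at hwS
      rcases hwS with e | e
      · rw [e, V321_norm hxV] at hwx; norm_num at hwx
      · rw [hy] at e; rw [e, inner_neg_left, V321_norm hxV] at hwx; norm_num at hwx
  · rintro ⟨hb1, hb2⟩ u hu v hv hne
    have huV := hM hu
    have hvV := hM hv
    rcases V321_inner huV hvV with h24 | h8 | h8' | h24'
    · exact absurd (V321_eq huV hvV h24) hne
    · -- adjacent: reflect across the difference root
      have hαΦ := root_of_adjacent huV hvV h8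
      have hαα := root_norm hαΦ
      have hvu : ⟪v, u⟫ = 8 := by rw [real_inner_comm]; exact h8
      have hu4 : ⟪u, (4:ℝ)⁻¹ • (u - v)⟫ = 4 := by
        rw [real_inner_smul_right, inner_sub_right, V321_norm huV, h8]; norm_num
      have hv4 : ⟪v, (4:ℝ)⁻¹ • (u - v)⟫ = -4 := by
        rw [real_inner_smul_right, inner_sub_right, V321_norm hvV, hvu]; norm_num
      have hru : reflVec ((4:ℝ)⁻¹ • (u - v)) u = v := by
        rw [reflVec_eq hαα, hu4]; module
      have hrv : reflVec ((4:ℝ)⁻¹ • (u - v)) v = u := by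
        rw [reflVec_eq hαα, hv4]; module
      exact ⟨_, hαΦ, by rw [hu4, hv4]; norm_num,
        by rw [hru]; exact hv, by rw [hrv]; exact hu⟩
    · -- distance two: use the facet equation
      have hPuv : ({u, v} : Set (EuclideanSpace ℝ (Fin 8))) ∈
          {s : Set (EuclideanSpace ℝ (Fin 8)) | ∃ B B', B ≠ B' ∧ s = {B, B'} ∧
            B ∈ ({u, v} ∪ {C | C ∈ V321 ∧ ⟪C, u⟫ = 8 ∧ ⟪C, v⟫ = 8} :
              Set (EuclideanSpace ℝ (Fin 8))) ∧
            B' ∈ ({u, v} ∪ {C | C ∈ V321 ∧ ⟪C, u⟫ = 8 ∧ ⟪C, v⟫ = 8} :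
              Set (EuclideanSpace ℝ (Fin 8))) ∧
            ⟪B, B'⟫ = -8 ∧ B ∈ M ∧ B' ∈ M} :=
        ⟨u, v, hne, rfl, Set.mem_union_left _ (Set.mem_insert _ _),
          Set.mem_union_left _ (Set.mem_insert_of_mem _ rfl), h8', hu, hv⟩
      have hex2 : ∃ s ∈
          {s : Set (EuclideanSpace ℝ (Fin 8)) | ∃ B B', B ≠ B' ∧ s = {B, B'} ∧
            B ∈ ({u, v} ∪ {C | C ∈ V321 ∧ ⟪C, u⟫ = 8 ∧ ⟪C, v⟫ = 8} :
              Set (EuclideanSpace ℝ (Fin 8))) ∧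
            B' ∈ ({u, v} ∪ {C | C ∈ V321 ∧ ⟪C, u⟫ = 8 ∧ ⟪C, v⟫ = 8} :
              Set (EuclideanSpace ℝ (Fin 8))) ∧
            ⟪B, B'⟫ = -8 ∧ B ∈ M ∧ B' ∈ M},
          s ≠ ({u, v} : Set (EuclideanSpace ℝ (Fin 8))) := by
        by_contra hcon
        push_neg at hcon
        exact hb1 u huV v hvV h8'
          (by rw [Set.eq_singleton_iff_unique_mem.mpr ⟨hPuv, hcon⟩]
              exact Set.ncard_singleton _)
      obtain ⟨s, hsP, hsne⟩ := hex2
      obtain ⟨B, B', hBne, rfl, hBd, hB'd, hBB', hBM, hB'M⟩ := hsP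
      obtain ⟨hBV, hB'V, hsum⟩ := facet_mem huV hvV h8' hBd hB'd hBB'
      rcases pair_to huV hvV hBV hB'V h8' hsum with ⟨e1, e2⟩ | ⟨e1, e2⟩ | ⟨hBu, hBv, hB'u, hB'v⟩
      · exact absurd (by rw [e1, e2]) hsne
      · exact absurd (by rw [e1, e2]; exact Set.pair_comm v u) hsne
      · have huB : ⟪u, B⟫ = 8 := by rw [real_inner_comm]; exact hBu
        have hvB : ⟪v, B⟫ = 8 := by rw [real_inner_comm]; exact hBv
        have hvu : ⟪v, u⟫ = -8 := by rw [real_inner_comm]; exact h8'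
        have hαΦ := root_of_adjacent huV hBV huB
        have hαα := root_norm hαΦ
        have hu4 : ⟪u, (4:ℝ)⁻¹ • (u - B)⟫ = 4 := by
          rw [real_inner_smul_right, inner_sub_right, V321_norm huV, huB]; norm_num
        have hv4 : ⟪v, (4:ℝ)⁻¹ • (u - B)⟫ = -4 := by
          rw [real_inner_smul_right, inner_sub_right, hvu, hvB]; norm_num
        have hB'eq : B' = u + v - B := by rw [← hsum]; abel
        have hru : reflVec ((4:ℝ)⁻¹ • (u - B)) u = B := by
          rw [reflVec_eq hαα, hu4]; module
        have hrv : reflVec ((4:ℝ)⁻¹ • (u - B)) v = B' := by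
          rw [reflVec_eq hαα, hv4, hB'eq]; module
        exact ⟨_, hαΦ, by rw [hu4, hv4]; norm_num,
          by rw [hru]; exact hBM, by rw [hrv]; exact hB'M⟩
    · -- antipodal
      have hvu : ⟪v, u⟫ = -24 := by rw [real_inner_comm]; exact h24'
      have hvequ : v = -u := V321_neg_eq hvV huV hvu
      subst hvequ
      have hneu : u ≠ -u := hne
      have huS : u ∈ {w : EuclideanSpace ℝ (Fin 8) | w ∈ V321 ∧ w ∈ M ∧ -w ∈ M} :=
        ⟨huV, hu, hv⟩
      have hnuS : -u ∈ {w : EuclideanSpace ℝ (Fin 8) | w ∈ V321 ∧ w ∈ M ∧ -w ∈ M} :=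
        ⟨V321_neg huV, hv, by rw [neg_neg]; exact hu⟩
      have hex2 : ∃ w ∈ {w : EuclideanSpace ℝ (Fin 8) | w ∈ V321 ∧ w ∈ M ∧ -w ∈ M},
          w ≠ u ∧ w ≠ -u := by
        by_contra hcon
        push_neg at hcon
        apply hb2
        have hSeq : {w : EuclideanSpace ℝ (Fin 8) | w ∈ V321 ∧ w ∈ M ∧ -w ∈ M}
            = {u, -u} := by
          apply Set.Subset.antisymm
          · intro w hw
            by_cases hwu : w = u
            · exact Or.inl hwu
            · exact Or.inr (hcon w hw hwu)
          · intro w hw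
            rcases hw with e | e
            · rw [e]; exact huS
            · rw [e]; exact hnuS
        rw [hSeq, Set.ncard_pair hneu]
      obtain ⟨w, ⟨hwV, hwM, hnwM⟩, hwu, hwnu⟩ := hex2
      rcases V321_inner huV hwV with h | h | h | h
      · exact absurd (V321_eq huV hwV h).symm hwu
      · -- ⟪u,w⟫ = 8
        have hαΦ := root_of_adjacent huV hwV h
        have hαα := root_norm hαΦ
        have hu4 : ⟪u, (4:ℝ)⁻¹ • (u - w)⟫ = 4 := by
          rw [real_inner_smul_right, inner_sub_right, V321_norm huV, h]; norm_num
        have hnu4 : ⟪-u, (4:ℝ)⁻¹ • (u - w)⟫ = -4 := by rw [inner_neg_left, hu4]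
        have hru : reflVec ((4:ℝ)⁻¹ • (u - w)) u = w := by
          rw [reflVec_eq hαα, hu4]; module
        have hrnu : reflVec ((4:ℝ)⁻¹ • (u - w)) (-u) = -w := by
          rw [reflVec_neg, hru]
        exact ⟨_, hαΦ, by rw [hu4, hnu4]; norm_num,
          by rw [hru]; exact hwM, by rw [hrnu]; exact hnwM⟩
      · -- ⟪u,w⟫ = -8
        have hnwV := V321_neg hwV
        have hunw : ⟪u, -w⟫ = 8 := by rw [inner_neg_right, h]; norm_num
        have hαΦ := root_of_adjacent huV hnwV hunw
        have hαα := root_norm hαΦ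
        have hu4 : ⟪u, (4:ℝ)⁻¹ • (u - -w)⟫ = 4 := by
          rw [real_inner_smul_right, inner_sub_right, V321_norm huV, hunw]; norm_num
        have hnu4 : ⟪-u, (4:ℝ)⁻¹ • (u - -w)⟫ = -4 := by rw [inner_neg_left, hu4]
        have hru : reflVec ((4:ℝ)⁻¹ • (u - -w)) u = -w := by
          rw [reflVec_eq hαα, hu4]; module
        have hrnu : reflVec ((4:ℝ)⁻¹ • (u - -w)) (-u) = w := by
          rw [reflVec_neg, hru, neg_neg]
        exact ⟨_, hαΦ, by rw [hu4, hnu4]; norm_num,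
          by rw [hru]; exact hnwM, by rw [hrnu]; exact hwM⟩
      · -- ⟪u,w⟫ = -24
        have : u = -w := V321_neg_eq huV hwV h
        exact absurd (by rw [this, neg_neg]) hwnu
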